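/- For every integer k ≥ 4, let W be the wheel metric space on vertex set {h} ∪ ZMod k with d(h, v_i) = 1 for each cycle vertex v_i and d(v_i, v_j) = min(min(|i−j|, k−|i−j|), 2) for cycle vertices (the graph metric of the wheel with hub h and cycle of length k). Then E(W) with the sup metric is isometric, by a bijection, to the set T_k = {x ∈ S_k : x_m ≤ 1/2 for all m} with the metric induced by the L¹ norm of ℝ^k — k Manhattan squares of side 1/2 glued at a common cone point — with the isometry sending d(h,·) to the origin and d(v_i,·) to (e_i + e_{i+1})/2 (indices mod k). -/
import Mathlib


/-- Isbell's tight span of a finite metric space `(X, d)`: the set of functions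
`f : X → ℝ` with `f p = max_q (d p q - f q)` for every `p`. -/
def tightSpan {X : Type*} [Fintype X] [Nonempty X] (d : X → X → ℝ) : Set (X → ℝ) :=
  {f | ∀ p, f p = Finset.univ.sup' Finset.univ_nonempty fun q => d p q - f q}

/-- The sup metric on functions `X → ℝ` for finite `X`. -/
noncomputable def supDist {X : Type*} [Fintype X] [Nonempty X] (f g : X → ℝ) : ℝ :=
  Finset.univ.sup' Finset.univ_nonempty fun p => |f p - g p|

/-- The order-`k` rectilinear cone: the union, over `i : ZMod k`, of the quadrants
`Q i = {x : ZMod k → ℝ | ∀ m, 0 ≤ x m, and x m = 0 for m ∉ {i, i+1}}`,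
a subset of `ℝ^k` carrying the `L¹` metric. -/
def rectCone (k : ℕ) [NeZero k] : Set (ZMod k → ℝ) :=
  ⋃ i : ZMod k, {x | (∀ m, 0 ≤ x m) ∧ ∀ m, m ≠ i → m ≠ i + 1 → x m = 0}

/-- The graph metric of the `k`-wheel: the hub `none` is at distance `1` from each cycle
vertex `some i`, and cycle vertices are at distance `min (min (|i-j|, k-|i-j|), 2)`. -/
noncomputable def dWheel (k : ℕ) [NeZero k] :
    Option (ZMod k) → Option (ZMod k) → ℝ
  | none, none => 0
  | none, some _ => 1
  | some _, none => 1
  | some i, some j => min (min (((i - j).val : ℝ)) (((j - i).val : ℝ))) 2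

section
variable (k : ℕ) [NeZero k]

lemma natCast_ne_zero'' {n : ℕ} (h0 : n ≠ 0) (hlt : n < k) : (n : ZMod k) ≠ 0 := by
  rw [Ne, ZMod.natCast_eq_zero_iff]
  exact fun hd => absurd (Nat.le_of_dvd (Nat.pos_of_ne_zero h0) hd) (not_le.2 hlt)

lemma oneNe (hk : 4 ≤ k) : (1 : ZMod k) ≠ 0 := by
  have := natCast_ne_zero'' k (n := 1) one_ne_zero (by omega); simpa using this

lemma twoNe (hk : 4 ≤ k) : (2 : ZMod k) ≠ 0 := by
  have := natCast_ne_zero'' k (n := 2) two_ne_zero (by omega); simpa using this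

lemma threeNe (hk : 4 ≤ k) : (3 : ZMod k) ≠ 0 := by
  have := natCast_ne_zero'' k (n := 3) three_ne_zero (by omega); simpa using this

lemma one_le_val' {z : ZMod k} (h0 : z ≠ 0) : 1 ≤ z.val :=
  Nat.pos_of_ne_zero (fun hc => h0 ((ZMod.val_eq_zero z).1 hc))

lemma two_le_val' (hk : 4 ≤ k) {z : ZMod k} (h0 : z ≠ 0) (h1 : z ≠ 1) : 2 ≤ z.val := by
  haveI : Fact (1 < k) := ⟨by omega⟩
  rcases Nat.lt_or_ge z.val 2 with h | h
  · interval_cases hv : z.val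
    · exact absurd ((ZMod.val_eq_zero z).1 hv) h0
    · exact absurd (by rw [← ZMod.natCast_rightInverse z, hv, Nat.cast_one]) h1
  · exact h

lemma dW_eq (hk : 4 ≤ k) (i j : ZMod k) :
    dWheel k (some i) (some j) =
      if i = j then 0 else if j = i + 1 then 1 else if i = j + 1 then 1 else 2 := by
  haveI : Fact (1 < k) := ⟨by omega⟩
  show min (min (((i - j).val : ℝ)) (((j - i).val : ℝ))) 2 = _
  by_cases hij : i = j
  · subst hij; simp
  by_cases h1 : j = i + 1
  · subst h1
    have hji : i + 1 - i = 1 := by ring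
    rw [if_neg hij, if_pos rfl, hji, ZMod.val_one]
    have h0 : i - (i + 1) ≠ 0 := by
      intro hc
      have : (1 : ZMod k) = 0 := by linear_combination -hc
      exact oneNe k hk this
    have : (1:ℝ) ≤ (((i - (i+1)).val : ℕ) : ℝ) := by
      exact_mod_cast one_le_val' k h0
    rw [Nat.cast_one, min_eq_right this]
    norm_num
  by_cases h2 : i = j + 1
  · rw [if_neg hij, if_neg h1, if_pos h2]
    subst h2
    have hij2 : j + 1 - j = 1 := by ring
    rw [hij2, ZMod.val_one]
    have h0 : j - (j + 1) ≠ 0 := by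
      intro hc
      have : (1 : ZMod k) = 0 := by linear_combination -hc
      exact oneNe k hk this
    have : (1:ℝ) ≤ (((j - (j+1)).val : ℕ) : ℝ) := by
      exact_mod_cast one_le_val' k h0
    rw [Nat.cast_one, min_eq_left this]
    norm_num
  · rw [if_neg hij, if_neg h1, if_neg h2]
    have ha : 2 ≤ (i - j).val := by
      refine two_le_val' k hk (sub_ne_zero.2 hij) (fun hc => h2 ?_)
      have := sub_add_cancel i j
      rw [hc] at this; rw [← this]; ring
    have hb : 2 ≤ (j - i).val := by
      refine two_le_val' k hk (sub_ne_zero.2 (Ne.symm hij)) (fun hc => h1 ?_)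
      have := sub_add_cancel j i
      rw [hc] at this; rw [← this]; ring
    have ha' : (2:ℝ) ≤ ((i - j).val : ℝ) := by exact_mod_cast ha
    have hb' : (2:ℝ) ≤ ((j - i).val : ℝ) := by exact_mod_cast hb
    rw [min_eq_right (le_min ha' hb')]
end
section
variable (k : ℕ) [NeZero k]

lemma ne1' (hk : 4 ≤ k) {z w : ZMod k} (h : z - w = 1) : z ≠ w := by
  intro hc; rw [hc, sub_self] at h; exact oneNe k hk h.symm

lemma ne2' (hk : 4 ≤ k) {z w : ZMod k} (h : z - w = 2) : z ≠ w := by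
  intro hc; rw [hc, sub_self] at h; exact twoNe k hk h.symm

lemma ne3' (hk : 4 ≤ k) {z w : ZMod k} (h : z - w = 3) : z ≠ w := by
  intro hc; rw [hc, sub_self] at h; exact threeNe k hk h.symm

/-- the point of the `i`-th square with coordinates `a, b`. -/
noncomputable def sqF (i : ZMod k) (a b : ℝ) : ZMod k → ℝ :=
  fun m => if m = i then a else if m = i + 1 then b else 0

/-- `sqA k i a b m = sqF k i a b m + sqF k i a b (m+1)`. -/
noncomputable def sqA (i : ZMod k) (a b : ℝ) (m : ZMod k) : ℝ :=
  if m = i then a + b else if m = i - 1 then a else if m = i + 1 then b else 0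

/-- the inverse isometry. -/
noncomputable def psiW (x : ZMod k → ℝ) : Option (ZMod k) → ℝ
  | none => ∑ m, x m
  | some j => (∑ m, x m) + 1 - 2 * (x j + x (j + 1))

/-- the isometry from the tight span to the Manhattan orbifold. -/
noncomputable def phiW (f : Option (ZMod k) → ℝ) : ZMod k → ℝ :=
  fun m => min ((f none - f (some (m - 1)) + 1) / 2) ((f none - f (some m) + 1) / 2)

lemma sum_sqF (hk : 4 ≤ k) (i : ZMod k) (a b : ℝ) : ∑ m, sqF k i a b m = a + b := by
  have h1 : (i + 1 : ZMod k) ≠ i := ne1' k hk (by ring)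
  have : ∀ m, sqF k i a b m = (if m = i then a else 0) + (if m = i + 1 then b else 0) := by
    intro m
    unfold sqF
    by_cases h : m = i
    · subst h; simp [h1.symm, (Ne.symm h1)]
    · by_cases h' : m = i + 1 <;> simp [h, h', oneNe k hk]
  rw [Finset.sum_congr rfl fun m _ => this m, Finset.sum_add_distrib]
  simp

lemma sqF_add (hk : 4 ≤ k) (i : ZMod k) (a b : ℝ) (m : ZMod k) :
    sqF k i a b m + sqF k i a b (m + 1) = sqA k i a b m := by
  have e1 : (i + 1 : ZMod k) ≠ i := ne1' k hk (by ring)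
  have e2 : (i + 2 : ZMod k) ≠ i := ne2' k hk (by ring)
  have e2' : (i + 1 : ZMod k) ≠ i - 1 := ne2' k hk (by ring)
  have e2'' : (i + 2 : ZMod k) ≠ i + 1 := ne1' k hk (by ring)
  have e3 : (i : ZMod k) ≠ i - 1 := ne1' k hk (by ring)
  unfold sqF sqA
  by_cases h1 : m = i
  · subst h1; simp [e1, e1.symm]
  by_cases h2 : m = i - 1
  · subst h2
    rw [sub_add_cancel]
    simp [e3.symm, e2'.symm, e3, e1]
  by_cases h3 : m = i + 1
  · subst h3
    have : i + 1 + 1 = i + 2 := by ring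
    rw [this]
    simp [e1, e2, e2'', e2']
  · have h4 : m + 1 ≠ i := fun hc => h2 (eq_sub_iff_add_eq.2 hc)
    have h5 : m + 1 ≠ i + 1 := fun hc => h1 (by exact add_right_cancel hc)
    simp [h1, h2, h3, h4, h5]

lemma psiW_sqF_none (hk : 4 ≤ k) (i : ZMod k) (a b : ℝ) :
    psiW k (sqF k i a b) none = a + b := sum_sqF k hk i a b

lemma psiW_sqF_some (hk : 4 ≤ k) (i : ZMod k) (a b : ℝ) (m : ZMod k) :
    psiW k (sqF k i a b) (some m) = a + b + 1 - 2 * sqA k i a b m := by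
  show (∑ m, sqF k i a b m) + 1 - 2 * (sqF k i a b m + sqF k i a b (m + 1)) = _
  rw [sum_sqF k hk, sqF_add k hk]

lemma sqA_nonneg {a b : ℝ} (ha : 0 ≤ a) (hb : 0 ≤ b) (i m : ZMod k) :
    0 ≤ sqA k i a b m := by
  unfold sqA; split_ifs <;> linarith

lemma sqA_le {a b : ℝ} (ha : 0 ≤ a) (hb : 0 ≤ b) (i m : ZMod k) :
    sqA k i a b m ≤ a + b := by
  unfold sqA; split_ifs <;> linarith

lemma sqA_far {a b : ℝ} {i m : ZMod k} (h1 : m ≠ i) (h2 : m ≠ i - 1) (h3 : m ≠ i + 1) :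
    sqA k i a b m = 0 := by
  unfold sqA; simp [h1, h2, h3]

lemma sqF_nonneg {a b : ℝ} (ha : 0 ≤ a) (hb : 0 ≤ b) (i m : ZMod k) :
    0 ≤ sqF k i a b m := by
  unfold sqF; split_ifs <;> linarith
end
section
variable {X : Type*} [Fintype X] [Nonempty X] {d : X → X → ℝ} {f : X → ℝ}

lemma tightSpan_le (hf : f ∈ tightSpan d) (p q : X) : d p q ≤ f p + f q := by
  have h := hf p
  have h2 := Finset.le_sup' (fun q => d p q - f q) (Finset.mem_univ q)
  rw [← h] at h2
  linarith

lemma tightSpan_exists (hf : f ∈ tightSpan d) (p : X) : ∃ q, f p + f q ≤ d p q := by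
  obtain ⟨q, -, hq⟩ :=
    Finset.exists_mem_eq_sup' (Finset.univ_nonempty (α := X)) (fun q => d p q - f q)
  exact ⟨q, by rw [hf p, hq]; linarith⟩

lemma mem_tightSpan (h1 : ∀ p q, d p q ≤ f p + f q) (h2 : ∀ p, ∃ q, f p + f q ≤ d p q) :
    f ∈ tightSpan d := by
  intro p
  refine le_antisymm ?_ (Finset.sup'_le _ _ fun q _ => by have := h1 p q; linarith)
  obtain ⟨q, hq⟩ := h2 p
  have hle := Finset.le_sup' (fun r => d p r - f r) (Finset.mem_univ q)
  exact le_trans (by linarith : f p ≤ d p q - f q) hle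
end

section
variable (k : ℕ) [NeZero k]

lemma dW_nn : dWheel k none none = 0 := rfl
lemma dW_ns (j : ZMod k) : dWheel k none (some j) = 1 := rfl
lemma dW_sn (j : ZMod k) : dWheel k (some j) none = 1 := rfl

lemma sqA_at_i (i : ZMod k) (a b : ℝ) : sqA k i a b i = a + b := by
  unfold sqA; rw [if_pos rfl]

lemma sqA_at_sub (hk : 4 ≤ k) (i : ZMod k) (a b : ℝ) : sqA k i a b (i - 1) = a := by
  unfold sqA
  rw [if_neg (Ne.symm (ne1' k hk (by ring : i - (i - 1) = 1))), if_pos rfl]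

lemma sqA_at_add (hk : 4 ≤ k) (i : ZMod k) (a b : ℝ) : sqA k i a b (i + 1) = b := by
  unfold sqA
  rw [if_neg (ne1' k hk (by ring)), if_neg (ne2' k hk (by ring)), if_pos rfl]

lemma sqA_adj (hk : 4 ≤ k) (i : ZMod k) {a b : ℝ} (ha0 : 0 ≤ a) (ha : a ≤ 1/2)
    (hb0 : 0 ≤ b) (hb : b ≤ 1/2) (p : ZMod k) :
    sqA k i a b p + sqA k i a b (p + 1) ≤ a + b + 1/2 := by
  by_cases h1 : p = i
  · subst h1; rw [sqA_at_i, sqA_at_add k hk]; linarith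
  by_cases h2 : p = i - 1
  · subst h2; rw [sqA_at_sub k hk, sub_add_cancel, sqA_at_i]; linarith
  by_cases h3 : p = i + 1
  · subst h3
    rw [sqA_at_add k hk, show i + 1 + 1 = i + 2 from by ring,
      sqA_far k (ne2' k hk (by ring)) (ne3' k hk (by ring)) (ne1' k hk (by ring))]
    linarith
  by_cases h4 : p = i - 2
  · subst h4
    rw [show i - 2 + 1 = i - 1 from by ring, sqA_at_sub k hk,
      sqA_far k (Ne.symm (ne2' k hk (by ring))) (Ne.symm (ne1' k hk (by ring)))
        (Ne.symm (ne3' k hk (by ring)))]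
    linarith
  · have g1 : p + 1 ≠ i := fun hc => h2 (by rw [eq_sub_iff_add_eq]; exact hc)
    have g2 : p + 1 ≠ i - 1 := fun hc => h4 (by
      have : p = i - 1 - 1 := eq_sub_iff_add_eq.2 hc
      rw [this]; ring)
    have g3 : p + 1 ≠ i + 1 := fun hc => h1 (add_right_cancel hc)
    rw [sqA_far k h1 h2 h3, sqA_far k g1 g2 g3]
    linarith

lemma sqA_sep (hk : 4 ≤ k) (i : ZMod k) {a b : ℝ} (ha0 : 0 ≤ a) (hb0 : 0 ≤ b)
    {p q : ZMod k} (hpq : p ≠ q) (hq1 : q ≠ p + 1) (hp1 : p ≠ q + 1) :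
    sqA k i a b p + sqA k i a b q ≤ a + b := by
  by_cases h1 : p = i
  · subst h1
    rw [sqA_at_i, sqA_far k (Ne.symm hpq) (fun hc => hp1 (by rw [hc]; ring)) hq1]
    linarith
  by_cases h2 : p = i - 1
  · subst h2
    rw [sqA_at_sub k hk]
    by_cases hq : q = i + 1
    · subst hq; rw [sqA_at_add k hk]
    · rw [sqA_far k (fun hc => hq1 (by rw [sub_add_cancel]; exact hc)) (Ne.symm hpq) hq]
      linarith
  by_cases h3 : p = i + 1
  · subst h3
    rw [sqA_at_add k hk]
    by_cases hq : q = i - 1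
    · subst hq; rw [sqA_at_sub k hk]; linarith
    · rw [sqA_far k (fun hc => hp1 (by rw [hc])) hq (Ne.symm hpq)]
      linarith
  · rw [sqA_far k h1 h2 h3]
    have := sqA_le k ha0 hb0 i q
    unfold sqA at *
    split_ifs at * <;> linarith
end
section
variable (k : ℕ) [NeZero k]

lemma psiW_sqF_mem (hk : 4 ≤ k) (i : ZMod k) {a b : ℝ} (ha0 : 0 ≤ a) (ha : a ≤ 1/2)
    (hb0 : 0 ≤ b) (hb : b ≤ 1/2) : psiW k (sqF k i a b) ∈ tightSpan (dWheel k) := by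
  have hS : a + b ≤ 1 := by linarith
  apply mem_tightSpan
  · rintro (_ | p) (_ | q)
    · rw [dW_nn, psiW_sqF_none k hk]; linarith
    · rw [dW_ns, psiW_sqF_none k hk, psiW_sqF_some k hk]
      have := sqA_le k ha0 hb0 i q; linarith
    · rw [dW_sn, psiW_sqF_none k hk, psiW_sqF_some k hk]
      have := sqA_le k ha0 hb0 i p; linarith
    · rw [dW_eq k hk, psiW_sqF_some k hk, psiW_sqF_some k hk]
      have l1 := sqA_le k ha0 hb0 i p
      have l2 := sqA_le k ha0 hb0 i q
      split_ifs with e1 e2 e3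
      · linarith
      · subst e2
        have := sqA_adj k hk i ha0 ha hb0 hb p; linarith
      · subst e3
        have := sqA_adj k hk i ha0 ha hb0 hb q; linarith
      · have := sqA_sep k hk i ha0 hb0 e1 e2 e3; linarith
  · rintro (_ | m)
    · refine ⟨some i, ?_⟩
      rw [dW_ns, psiW_sqF_none k hk, psiW_sqF_some k hk, sqA_at_i]; linarith
    by_cases h1 : m = i
    · subst h1
      refine ⟨none, ?_⟩
      rw [dW_sn, psiW_sqF_none k hk, psiW_sqF_some k hk, sqA_at_i]; linarith
    by_cases h2 : m = i - 1
    · subst h2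
      refine ⟨some (i + 1), ?_⟩
      rw [dW_eq k hk, psiW_sqF_some k hk, psiW_sqF_some k hk, sqA_at_sub k hk,
        sqA_at_add k hk]
      rw [if_neg (Ne.symm (ne2' k hk (by ring : (i + 1) - (i - 1) = 2))), sub_add_cancel,
        if_neg (ne1' k hk (by ring : (i + 1) - i = 1)),
        if_neg (Ne.symm (ne3' k hk (by ring : (i + 1 + 1) - (i - 1) = 3)))]
      linarith
    by_cases h3 : m = i + 1
    · subst h3
      refine ⟨some (i - 1), ?_⟩
      rw [dW_eq k hk, psiW_sqF_some k hk, psiW_sqF_some k hk, sqA_at_sub k hk,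
        sqA_at_add k hk]
      rw [if_neg (ne2' k hk (by ring : (i + 1) - (i - 1) = 2)),
        if_neg (Ne.symm (ne3' k hk (by ring : (i + 1 + 1) - (i - 1) = 3))), sub_add_cancel,
        if_neg (ne1' k hk (by ring : (i + 1) - i = 1))]
      linarith
    · refine ⟨some i, ?_⟩
      rw [dW_eq k hk, psiW_sqF_some k hk, psiW_sqF_some k hk, sqA_at_i,
        sqA_far k h1 h2 h3]
      rw [if_neg h1, if_neg (fun hc : i = m + 1 => h2 (eq_sub_iff_add_eq.2 hc.symm)),
        if_neg (fun hc : m = i + 1 => h3 hc)]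
      linarith
end
section
variable (k : ℕ) [NeZero k]

lemma dW_le_two (p q : ZMod k) : dWheel k (some p) (some q) ≤ 2 := min_le_right _ _

lemma tightSpan_rep (hk : 4 ≤ k) {f : Option (ZMod k) → ℝ}
    (hf : f ∈ tightSpan (dWheel k)) :
    ∃ (i : ZMod k) (a b : ℝ), 0 ≤ a ∧ a ≤ 1/2 ∧ 0 ≤ b ∧ b ≤ 1/2 ∧
      f = psiW k (sqF k i a b) := by
  set A : ZMod k → ℝ := fun j => (f none + 1 - f (some j)) / 2 with hA
  have eA : ∀ j, f (some j) = f none + 1 - 2 * A j := fun j => by rw [hA]; ring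
  have h1 : ∀ p q, dWheel k p q ≤ f p + f q := tightSpan_le hf
  have hF0 : 0 ≤ f none := by have := h1 none none; rw [dW_nn] at this; linarith
  have hg_lb : ∀ j, 1 - f none ≤ f (some j) := fun j => by
    have := h1 none (some j); rw [dW_ns] at this; linarith
  have hAleF : ∀ j, A j ≤ f none := fun j => by
    have := hg_lb j; rw [eA j] at this; linarith
  have hA0 : ∀ j, 0 ≤ A j := by
    intro j
    obtain ⟨q, hq⟩ := tightSpan_exists hf (some j)
    cases q with
    | none => rw [dW_sn] at hq; rw [eA j] at hq; linarith
    | some l =>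
      have hd := dW_le_two k j l
      have := hg_lb l
      rw [eA j] at hq; linarith
  have hpair : ∀ j l, j ≠ l → l ≠ j + 1 → j ≠ l + 1 → A j + A l ≤ f none := by
    intro j l e1 e2 e3
    have := h1 (some j) (some l)
    rw [dW_eq k hk, if_neg e1, if_neg e2, if_neg e3, eA j, eA l] at this
    linarith
  have hadj : ∀ j, A j + A (j + 1) ≤ f none + 1/2 := by
    intro j
    have := h1 (some j) (some (j + 1))
    rw [dW_eq k hk, if_neg (Ne.symm (ne1' k hk (by ring))), if_pos rfl,
      eA j, eA (j + 1)] at this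
    linarith
  obtain ⟨q0, hq0⟩ := tightSpan_exists hf none
  have hub : ∃ i, A i = f none := by
    cases q0 with
    | none =>
      rw [dW_nn] at hq0
      refine ⟨0, le_antisymm (by linarith [hAleF 0]) (by linarith [hA0 0])⟩
    | some m =>
      rw [dW_ns, eA m] at hq0
      exact ⟨m, by linarith [hg_lb m, eA m]⟩
  obtain ⟨i, hAi⟩ := hub
  have hF1 : f none ≤ 1 := by
    have := h1 (some i) (some i)
    rw [dW_eq k hk, if_pos rfl, eA i] at this
    linarith
  have hfar : ∀ j, j ≠ i → j ≠ i + 1 → j ≠ i - 1 → A j = 0 := by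
    intro j hj1 hj2 hj3
    have := hpair i j (Ne.symm hj1) hj2 (fun hc => hj3 (eq_sub_iff_add_eq.2 hc.symm))
    have := hA0 j
    linarith
  have hm1 : A (i - 1) ≤ 1/2 := by
    have := hadj (i - 1); rw [sub_add_cancel] at this; linarith
  have hp1 : A (i + 1) ≤ 1/2 := by
    have := hadj i; linarith
  have hsum_le : A (i - 1) + A (i + 1) ≤ f none := by
    refine hpair (i - 1) (i + 1) (Ne.symm (ne2' k hk (by ring)))
      (fun hc => oneNe k hk (by linear_combination hc))
      (fun hc => threeNe k hk (by linear_combination -hc))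
  have hsum_ge : f none ≤ A (i - 1) + A (i + 1) := by
    obtain ⟨q, hq⟩ := tightSpan_exists hf (some (i + 1))
    cases q with
    | none =>
      rw [dW_sn, eA (i + 1)] at hq
      linarith [hA0 (i - 1)]
    | some l =>
      rw [dW_eq k hk] at hq
      by_cases c1 : i + 1 = l
      · rw [if_pos c1, ← c1, eA (i + 1)] at hq
        linarith [hA0 (i - 1), hA0 (i + 1), hF0]
      rw [if_neg c1] at hq
      by_cases c2 : l = i + 1 + 1
      · rw [if_pos c2, c2, eA (i + 1), eA (i + 1 + 1)] at hq
        have hz : A (i + 1 + 1) = 0 :=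
          hfar _ (ne2' k hk (by ring)) (ne1' k hk (by ring)) (ne3' k hk (by ring))
        linarith [hAleF (i + 1)]
      rw [if_neg c2] at hq
      by_cases c3 : i + 1 = l + 1
      · have hl : l = i := (add_right_cancel c3).symm
        rw [if_pos c3, hl, eA (i + 1), eA i] at hq
        -- now A (i+1) ≥ 1/2
        obtain ⟨q', hq'⟩ := tightSpan_exists hf (some (i - 1))
        cases q' with
        | none =>
          rw [dW_sn, eA (i - 1)] at hq'
          linarith [hA0 (i + 1)]
        | some l' =>
          rw [dW_eq k hk] at hq'
          by_cases d1 : i - 1 = l'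
          · rw [if_pos d1, ← d1, eA (i - 1)] at hq'
            linarith [hA0 (i - 1), hA0 (i + 1), hF0]
          rw [if_neg d1] at hq'
          by_cases d2 : l' = i - 1 + 1
          · rw [if_pos d2, d2, sub_add_cancel, eA (i - 1), eA i] at hq'
            linarith [hF1]
          rw [if_neg d2] at hq'
          by_cases d3 : i - 1 = l' + 1
          · have hl' : l' = i - 1 - 1 := eq_sub_iff_add_eq.2 d3.symm
            rw [if_pos d3, hl', eA (i - 1), eA (i - 1 - 1)] at hq'
            have hz : A (i - 1 - 1) = 0 :=
              hfar _ (Ne.symm (ne2' k hk (by ring))) (Ne.symm (ne3' k hk (by ring)))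
                (Ne.symm (ne1' k hk (by ring)))
            linarith [hAleF (i - 1)]
          · rw [if_neg d3, eA (i - 1), eA l'] at hq'
            by_cases hl2 : l' = i + 1
            · rw [hl2] at hq'; linarith
            · have hz : A l' = 0 :=
                hfar _ (fun hc => d2 (by rw [hc, sub_add_cancel])) hl2
                  (fun hc => d1 hc.symm)
              rw [hz] at hq'
              linarith [hA0 (i + 1)]
      · rw [if_neg c3, eA (i + 1), eA l] at hq
        by_cases hl2 : l = i - 1
        · rw [hl2] at hq; linarith
        · have hz : A l = 0 :=
            hfar _ (fun hc => c3 (by rw [hc])) (fun hc => c1 hc.symm) hl2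
          rw [hz] at hq
          linarith [hA0 (i - 1)]
  refine ⟨i, A (i - 1), A (i + 1), hA0 _, hm1, hA0 _, hp1, ?_⟩
  funext p
  cases p with
  | none =>
    rw [psiW_sqF_none k hk]; linarith
  | some m =>
    rw [psiW_sqF_some k hk, eA m]
    have hAm : A m = sqA k i (A (i - 1)) (A (i + 1)) m := by
      by_cases e1 : m = i
      · subst e1; rw [sqA_at_i, hAi]; linarith
      by_cases e2 : m = i - 1
      · subst e2; rw [sqA_at_sub k hk]
      by_cases e3 : m = i + 1
      · subst e3; rw [sqA_at_add k hk]
      · rw [sqA_far k e1 e2 e3, hfar m e1 e3 e2]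
    rw [hAm]; linarith
end
section
variable (k : ℕ) [NeZero k]

lemma phi_psi (hk : 4 ≤ k) (i : ZMod k) {a b : ℝ} (ha0 : 0 ≤ a) (hb0 : 0 ≤ b) :
    phiW k (psiW k (sqF k i a b)) = sqF k i a b := by
  funext m
  have key : ∀ j, (psiW k (sqF k i a b) none - psiW k (sqF k i a b) (some j) + 1) / 2
      = sqA k i a b j := by
    intro j; rw [psiW_sqF_none k hk, psiW_sqF_some k hk]; ring
  show min _ _ = _
  rw [key (m - 1), key m]
  unfold sqF
  by_cases h1 : m = i
  · subst h1
    rw [sqA_at_sub k hk, sqA_at_i, if_pos rfl]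
    exact min_eq_left (by linarith)
  by_cases h2 : m = i + 1
  · subst h2
    rw [show i + 1 - 1 = i from by ring, sqA_at_i, sqA_at_add k hk,
      if_neg (ne1' k hk (by ring)), if_pos rfl]
    exact min_eq_right (by linarith)
  by_cases h3 : m = i - 1
  · subst h3
    rw [show i - 1 - 1 = i - 2 from by ring, sqA_at_sub k hk,
      sqA_far k (Ne.symm (ne2' k hk (by ring))) (Ne.symm (ne1' k hk (by ring)))
        (Ne.symm (ne3' k hk (by ring))),
      if_neg (Ne.symm (ne1' k hk (by ring : i - (i - 1) = 1))),
      if_neg (Ne.symm (ne2' k hk (by ring : (i + 1) - (i - 1) = 2)))]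
    exact min_eq_left (by linarith)
  by_cases h4 : m = i + 2
  · subst h4
    rw [show i + 2 - 1 = i + 1 from by ring, sqA_at_add k hk,
      sqA_far k (ne2' k hk (by ring)) (ne3' k hk (by ring)) (ne1' k hk (by ring)),
      if_neg (ne2' k hk (by ring)), if_neg (ne1' k hk (by ring))]
    exact min_eq_right (by linarith)
  · have g1 : m - 1 ≠ i := fun hc => h2 (by rw [sub_eq_iff_eq_add] at hc; exact hc)
    have g2 : m - 1 ≠ i - 1 := fun hc => h1 (by
      rw [sub_eq_iff_eq_add] at hc; rw [hc, sub_add_cancel])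
    have g3 : m - 1 ≠ i + 1 := fun hc => h4 (by
      rw [sub_eq_iff_eq_add] at hc; rw [hc]; ring)
    rw [sqA_far k g1 g2 g3, sqA_far k h1 h3 h2, if_neg h1, if_neg h2, min_self]
end
lemma abs_max1 (u v : ℝ) : |u| + |v| ≤ max |u + v| |u - v| := by
  have m1 := le_max_left |u + v| |u - v|
  have m2 := le_max_right |u + v| |u - v|
  have a1 := le_abs_self (u + v); have a2 := neg_abs_le (u + v)
  have a3 := le_abs_self (u - v); have a4 := neg_abs_le (u - v)
  rcases abs_cases u with ⟨hu, _⟩ | ⟨hu, _⟩ <;> rcases abs_cases v with ⟨hv, _⟩ | ⟨hv, _⟩ <;>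
    linarith

lemma abs_max2 {X : ℝ} (t : ℝ) (hX : 0 ≤ X) : X + |t| ≤ max |X + t| |X - t| := by
  have m1 := le_max_left |X + t| |X - t|
  have m2 := le_max_right |X + t| |X - t|
  have a1 := le_abs_self (X + t)
  have a3 := le_abs_self (X - t)
  rcases abs_cases t with ⟨ht, _⟩ | ⟨ht, _⟩ <;> linarith

section
variable {X : Type*} [Fintype X] [Nonempty X]

lemma supDist_eq1 {f g : X → ℝ} {M : ℝ} (hub : ∀ p, |f p - g p| ≤ M) (p : X)
    (hw : M ≤ |f p - g p|) : supDist f g = M := by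
  unfold supDist
  exact le_antisymm (Finset.sup'_le _ _ fun q _ => hub q)
    (le_trans hw (Finset.le_sup' (fun r => |f r - g r|) (Finset.mem_univ p)))

lemma supDist_eq2 {f g : X → ℝ} {M : ℝ} (hub : ∀ p, |f p - g p| ≤ M) (p q : X)
    (hw : M ≤ max |f p - g p| |f q - g q|) : supDist f g = M := by
  unfold supDist
  refine le_antisymm (Finset.sup'_le _ _ fun r _ => hub r) ?_
  rcases le_max_iff.1 hw with h | h
  · exact le_trans h (Finset.le_sup' (fun r => |f r - g r|) (Finset.mem_univ p))
  · exact le_trans h (Finset.le_sup' (fun r => |f r - g r|) (Finset.mem_univ q))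
end

section
variable (k : ℕ) [NeZero k]

lemma iso_same (hk : 4 ≤ k) (i : ZMod k) (a b c d : ℝ) :
    supDist (psiW k (sqF k i a b)) (psiW k (sqF k i c d)) = |a - c| + |b - d| := by
  have U1 := le_abs_self (a - c); have U2 := neg_abs_le (a - c)
  have V1 := le_abs_self (b - d); have V2 := neg_abs_le (b - d)
  have hub : ∀ p, |psiW k (sqF k i a b) p - psiW k (sqF k i c d) p| ≤ |a - c| + |b - d| := by
    rintro (_ | m)
    · rw [psiW_sqF_none k hk, psiW_sqF_none k hk]
      exact abs_le.2 ⟨by linarith, by linarith⟩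
    rw [psiW_sqF_some k hk, psiW_sqF_some k hk]
    by_cases h1 : m = i
    · subst h1; rw [sqA_at_i, sqA_at_i]
      exact abs_le.2 ⟨by linarith, by linarith⟩
    by_cases h2 : m = i - 1
    · subst h2; rw [sqA_at_sub k hk, sqA_at_sub k hk]
      exact abs_le.2 ⟨by linarith, by linarith⟩
    by_cases h3 : m = i + 1
    · subst h3; rw [sqA_at_add k hk, sqA_at_add k hk]
      exact abs_le.2 ⟨by linarith, by linarith⟩
    · rw [sqA_far k h1 h2 h3, sqA_far k h1 h2 h3]
      exact abs_le.2 ⟨by linarith, by linarith⟩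
  apply supDist_eq2 hub none (some (i - 1))
  rw [psiW_sqF_none k hk, psiW_sqF_none k hk, psiW_sqF_some k hk, psiW_sqF_some k hk,
      sqA_at_sub k hk, sqA_at_sub k hk]
  have h := abs_max1 (a - c) (b - d)
  rw [abs_sub_comm (a - c) (b - d)] at h
  rw [show (a - c) + (b - d) = a + b - (c + d) from by ring] at h
  rw [show (b - d) - (a - c) = a + b + 1 - 2*a - (c + d + 1 - 2*c) from by ring] at h
  exact h

lemma iso_adj (hk : 4 ≤ k) (i : ZMod k) {a b c d : ℝ} (ha0 : 0 ≤ a) (hd0 : 0 ≤ d) :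
    supDist (psiW k (sqF k i a b)) (psiW k (sqF k (i + 1) c d)) = a + |b - c| + d := by
  have T1 := le_abs_self (b - c); have T2 := neg_abs_le (b - c)
  have e1 : sqA k (i + 1) c d i = c := by
    have := sqA_at_sub k hk (i + 1) c d
    rwa [show i + 1 - 1 = i from by ring] at this
  have e2 : sqA k (i + 1) c d (i + 2) = d := by
    have := sqA_at_add k hk (i + 1) c d
    rwa [show i + 1 + 1 = i + 2 from by ring] at this
  have hub : ∀ p, |psiW k (sqF k i a b) p - psiW k (sqF k (i + 1) c d) p| ≤ a + |b - c| + d := by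
    rintro (_ | m)
    · rw [psiW_sqF_none k hk, psiW_sqF_none k hk]
      exact abs_le.2 ⟨by linarith, by linarith⟩
    rw [psiW_sqF_some k hk, psiW_sqF_some k hk]
    by_cases h1 : m = i
    · subst h1; rw [sqA_at_i, e1]
      exact abs_le.2 ⟨by linarith, by linarith⟩
    by_cases h2 : m = i + 1
    · subst h2; rw [sqA_at_add k hk, sqA_at_i]
      exact abs_le.2 ⟨by linarith, by linarith⟩
    by_cases h3 : m = i - 1
    · subst h3
      rw [sqA_at_sub k hk,
        sqA_far k (Ne.symm (ne2' k hk (by ring)))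
          (Ne.symm (ne1' k hk (by ring : (i + 1 - 1) - (i - 1) = 1)))
          (Ne.symm (ne3' k hk (by ring)))]
      exact abs_le.2 ⟨by linarith, by linarith⟩
    by_cases h4 : m = i + 2
    · subst h4
      rw [e2, sqA_far k (ne2' k hk (by ring)) (ne3' k hk (by ring)) (ne1' k hk (by ring))]
      exact abs_le.2 ⟨by linarith, by linarith⟩
    · rw [sqA_far k h1 h3 h2,
        sqA_far k h2 (fun hc => h1 (hc.trans (by ring))) (fun hc => h4 (hc.trans (by ring)))]
      exact abs_le.2 ⟨by linarith, by linarith⟩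
  apply supDist_eq2 hub (some i) (some (i + 1))
  rw [psiW_sqF_some k hk, psiW_sqF_some k hk, psiW_sqF_some k hk, psiW_sqF_some k hk,
      sqA_at_i, e1, sqA_at_add k hk, sqA_at_i]
  have h := abs_max2 (X := a + d) (b - c) (by linarith)
  rw [show (a + d) + (b - c) = -(a + b + 1 - 2*(a+b) - (c + d + 1 - 2*c)) from by ring,
    abs_neg,
    show (a + d) - (b - c) = a + b + 1 - 2*b - (c + d + 1 - 2*(c+d)) from by ring] at h
  linarith

lemma iso_far (hk : 4 ≤ k) (i j : ZMod k) {a b c d : ℝ} (ha0 : 0 ≤ a) (hb0 : 0 ≤ b)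
    (hc0 : 0 ≤ c) (hd0 : 0 ≤ d) (hij1 : j ≠ i) (hij2 : j ≠ i + 1) (hij3 : i ≠ j + 1) :
    supDist (psiW k (sqF k i a b)) (psiW k (sqF k j c d)) = a + b + c + d := by
  have hub : ∀ p, |psiW k (sqF k i a b) p - psiW k (sqF k j c d) p| ≤ a + b + c + d := by
    rintro (_ | m)
    · rw [psiW_sqF_none k hk, psiW_sqF_none k hk]
      exact abs_le.2 ⟨by linarith, by linarith⟩
    · rw [psiW_sqF_some k hk, psiW_sqF_some k hk]
      exact abs_le.2
        ⟨by linarith [sqA_nonneg k ha0 hb0 i m, sqA_le k ha0 hb0 i m,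
            sqA_nonneg k hc0 hd0 j m, sqA_le k hc0 hd0 j m],
         by linarith [sqA_nonneg k ha0 hb0 i m, sqA_le k ha0 hb0 i m,
            sqA_nonneg k hc0 hd0 j m, sqA_le k hc0 hd0 j m]⟩
  apply supDist_eq1 hub (some i)
  rw [psiW_sqF_some k hk, psiW_sqF_some k hk, sqA_at_i,
    sqA_far k (Ne.symm hij1) (fun hc => hij2 (eq_sub_iff_add_eq.1 hc).symm) hij3]
  rw [show a + b + 1 - 2*(a+b) - (c + d + 1 - 2*0) = -(a + b + c + d) from by ring,
    abs_neg, abs_of_nonneg (by linarith)]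
end
section
variable (k : ℕ) [NeZero k]

lemma sum_same' (hk : 4 ≤ k) (i : ZMod k) (a b c d : ℝ) :
    ∑ m, |sqF k i a b m - sqF k i c d m| = |a - c| + |b - d| := by
  have h1 : (i + 1 : ZMod k) ≠ i := ne1' k hk (by ring)
  have key : ∀ m, |sqF k i a b m - sqF k i c d m|
      = (if m = i then |a - c| else 0) + (if m = i + 1 then |b - d| else 0) := by
    intro m; unfold sqF
    by_cases e1 : m = i
    · subst e1; simp [Ne.symm h1]
    · by_cases e2 : m = i + 1
      · subst e2; simp [h1]
      · simp [e1, e2]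
  rw [Finset.sum_congr rfl fun m _ => key m, Finset.sum_add_distrib]
  simp

lemma sum_adj' (hk : 4 ≤ k) (i : ZMod k) {a b c d : ℝ} (ha0 : 0 ≤ a) (hd0 : 0 ≤ d) :
    ∑ m, |sqF k i a b m - sqF k (i + 1) c d m| = a + |b - c| + d := by
  have n1 : (i + 1 : ZMod k) ≠ i := ne1' k hk (by ring)
  have n2 : (i + 1 + 1 : ZMod k) ≠ i := ne2' k hk (by ring)
  have n3 : (i + 1 + 1 : ZMod k) ≠ i + 1 := ne1' k hk (by ring)
  have key : ∀ m, |sqF k i a b m - sqF k (i + 1) c d m|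
      = ((if m = i then a else 0) + (if m = i + 1 then |b - c| else 0))
        + (if m = i + 1 + 1 then d else 0) := by
    intro m; unfold sqF
    by_cases e1 : m = i
    · subst e1; simp [Ne.symm n1, Ne.symm n2, abs_of_nonneg ha0]
    by_cases e2 : m = i + 1
    · subst e2; simp [n1, Ne.symm n3]
    by_cases e3 : m = i + 1 + 1
    · subst e3; simp [n2, n3, abs_of_nonneg hd0]
    · simp [e1, e2, e3]
  rw [Finset.sum_congr rfl fun m _ => key m, Finset.sum_add_distrib,
    Finset.sum_add_distrib]
  simp

lemma sum_far' (hk : 4 ≤ k) (i j : ZMod k) {a b c d : ℝ} (ha0 : 0 ≤ a) (hb0 : 0 ≤ b)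
    (hc0 : 0 ≤ c) (hd0 : 0 ≤ d) (hij1 : j ≠ i) (hij2 : j ≠ i + 1) (hij3 : i ≠ j + 1) :
    ∑ m, |sqF k i a b m - sqF k j c d m| = a + b + c + d := by
  have n1 : (i : ZMod k) ≠ j := Ne.symm hij1
  have n2 : (i : ZMod k) ≠ j + 1 := hij3
  have n3 : (i + 1 : ZMod k) ≠ j := Ne.symm hij2
  have n4 : (i + 1 : ZMod k) ≠ j + 1 := fun hc => hij1 (add_right_cancel hc).symm
  have n5 : (i + 1 : ZMod k) ≠ i := ne1' k hk (by ring)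
  have n6 : (j + 1 : ZMod k) ≠ j := ne1' k hk (by ring)
  have key : ∀ m, |sqF k i a b m - sqF k j c d m|
      = ((if m = i then a else 0) + (if m = i + 1 then b else 0))
        + ((if m = j then c else 0) + (if m = j + 1 then d else 0)) := by
    intro m; unfold sqF
    by_cases e1 : m = i
    · subst e1; simp [Ne.symm n5, n1, n2, abs_of_nonneg ha0]
    by_cases e2 : m = i + 1
    · subst e2; simp [n5, n3, n4, abs_of_nonneg hb0]
    by_cases e3 : m = j
    · subst e3; simp [e1, e2, Ne.symm n6, abs_of_nonneg hc0]
    by_cases e4 : m = j + 1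
    · subst e4; simp [e1, e2, n6, abs_of_nonneg hd0]
    · simp [e1, e2, e3, e4]
  rw [Finset.sum_congr rfl fun m _ => key m, Finset.sum_add_distrib,
    Finset.sum_add_distrib, Finset.sum_add_distrib]
  simp
  ring
end

lemma supDist_comm' {X : Type*} [Fintype X] [Nonempty X] (f g : X → ℝ) :
    supDist f g = supDist g f := by
  unfold supDist
  congr 1
  funext p
  exact abs_sub_comm _ _

section
variable (k : ℕ) [NeZero k]

lemma mem_T_iff (hk : 4 ≤ k) (x : ZMod k → ℝ) :
    (x ∈ rectCone k ∧ ∀ m, x m ≤ 1/2) ↔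
      ∃ (i : ZMod k) (a b : ℝ), 0 ≤ a ∧ a ≤ 1/2 ∧ 0 ≤ b ∧ b ≤ 1/2 ∧ x = sqF k i a b := by
  constructor
  · rintro ⟨hx, hle⟩
    rw [rectCone, Set.mem_iUnion] at hx
    obtain ⟨i, h0, hz⟩ := hx
    refine ⟨i, x i, x (i + 1), h0 i, hle i, h0 _, hle _, ?_⟩
    funext m; unfold sqF
    by_cases e1 : m = i
    · subst e1; rw [if_pos rfl]
    by_cases e2 : m = i + 1
    · subst e2; rw [if_neg (ne1' k hk (by ring)), if_pos rfl]
    · rw [if_neg e1, if_neg e2]; exact hz m e1 e2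
  · rintro ⟨i, a, b, ha0, ha, hb0, hb, rfl⟩
    constructor
    · rw [rectCone, Set.mem_iUnion]
      exact ⟨i, fun m => sqF_nonneg k ha0 hb0 i m,
        fun m e1 e2 => by unfold sqF; rw [if_neg e1, if_neg e2]⟩
    · intro m; unfold sqF; split_ifs <;> linarith
end
section
variable (k : ℕ) [NeZero k]

lemma dW_hub_eq (hk : 4 ≤ k) : dWheel k none = psiW k (sqF k 0 0 0) := by
  have hz : ∀ j : ZMod k, sqA k 0 0 0 j = 0 := by
    intro j; unfold sqA; split_ifs <;> norm_num
  funext p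
  cases p with
  | none => rw [dW_nn, psiW_sqF_none k hk]; norm_num
  | some j => rw [dW_ns, psiW_sqF_some k hk, hz]; norm_num

lemma dW_vertex_eq (hk : 4 ≤ k) (i : ZMod k) :
    dWheel k (some i) = psiW k (sqF k i (1/2) (1/2)) := by
  funext p
  cases p with
  | none => rw [dW_sn, psiW_sqF_none k hk]; norm_num
  | some j =>
    rw [dW_eq k hk, psiW_sqF_some k hk]
    by_cases e1 : i = j
    · subst e1; rw [if_pos rfl, sqA_at_i]; norm_num
    rw [if_neg e1]
    by_cases e2 : j = i + 1
    · subst e2; rw [if_pos rfl, sqA_at_add k hk]; norm_num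
    rw [if_neg e2]
    by_cases e3 : i = j + 1
    · have hj : j = i - 1 := eq_sub_iff_add_eq.2 e3.symm
      rw [if_pos e3, hj, sqA_at_sub k hk]; norm_num
    · rw [if_neg e3,
        sqA_far k (fun hc => e1 hc.symm) (fun hc => e3 (eq_sub_iff_add_eq.1 hc).symm) e2]
      norm_num
end


/-- The tight span of the wheel with hub `h` and cycle length `k ≥ 4` is a Manhattan
orbifold: `k` Manhattan squares of side `1/2` glued at a common cone point, namely
`T_k = {x ∈ S_k : ∀ m, x m ≤ 1/2}` with the `L¹` metric, the hub going to the cone point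
(the origin) and the cycle vertex `v i` to `(e i + e (i+1)) / 2`. -/
theorem tightSpan_wheel (k : ℕ) [NeZero k] (hk : 4 ≤ k) :
    ∃ φ : (Option (ZMod k) → ℝ) → ZMod k → ℝ,
      Set.BijOn φ (tightSpan (dWheel k)) {x | x ∈ rectCone k ∧ ∀ m, x m ≤ 1 / 2} ∧
      (∀ f ∈ tightSpan (dWheel k), ∀ g ∈ tightSpan (dWheel k),
        (∑ m, |φ f m - φ g m|) = supDist f g) ∧
      φ (dWheel k none) = (fun _ => 0) ∧
      (∀ i : ZMod k, φ (dWheel k (some i)) =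
        fun m => if m = i ∨ m = i + 1 then 1 / 2 else 0) := by
  refine ⟨phiW k, ⟨?_, ?_, ?_⟩, ?_, ?_, ?_⟩
  · -- MapsTo
    intro f hf
    obtain ⟨i, a, b, ha0, ha, hb0, hb, rfl⟩ := tightSpan_rep k hk hf
    rw [phi_psi k hk i ha0 hb0]
    exact (mem_T_iff k hk _).2 ⟨i, a, b, ha0, ha, hb0, hb, rfl⟩
  · -- InjOn
    intro f hf g hg he
    obtain ⟨i, a, b, ha0, ha, hb0, hb, hfe⟩ := tightSpan_rep k hk hf
    obtain ⟨j, c, d, hc0, hc, hd0, hd, hge⟩ := tightSpan_rep k hk hg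
    rw [hfe, hge]
    rw [← phi_psi k hk i ha0 hb0, ← phi_psi k hk j hc0 hd0, ← hfe, ← hge, he]
  · -- SurjOn
    intro x hx
    obtain ⟨i, a, b, ha0, ha, hb0, hb, rfl⟩ := (mem_T_iff k hk _).1 hx
    exact ⟨psiW k (sqF k i a b), psiW_sqF_mem k hk i ha0 ha hb0 hb,
      phi_psi k hk i ha0 hb0⟩
  · -- isometry
    intro f hf g hg
    obtain ⟨i, a, b, ha0, ha, hb0, hb, rfl⟩ := tightSpan_rep k hk hf
    obtain ⟨j, c, d, hc0, hc, hd0, hd, rfl⟩ := tightSpan_rep k hk hg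
    rw [phi_psi k hk i ha0 hb0, phi_psi k hk j hc0 hd0]
    by_cases hji : j = i
    · subst hji; rw [iso_same k hk, sum_same' k hk]
    by_cases hj1 : j = i + 1
    · subst hj1; rw [iso_adj k hk i ha0 hd0, sum_adj' k hk i ha0 hd0]
    by_cases hi1 : i = j + 1
    · subst hi1
      rw [supDist_comm',
        Finset.sum_congr rfl fun m _ => abs_sub_comm (sqF k (j+1) a b m) (sqF k j c d m),
        iso_adj k hk j hc0 hb0, sum_adj' k hk j hc0 hb0]
    · rw [iso_far k hk i j ha0 hb0 hc0 hd0 hji hj1 hi1,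
        sum_far' k hk i j ha0 hb0 hc0 hd0 hji hj1 hi1]
  · -- hub
    rw [dW_hub_eq k hk, phi_psi k hk 0 le_rfl le_rfl]
    funext m; unfold sqF; split_ifs <;> rfl
  · -- vertices
    intro i
    rw [dW_vertex_eq k hk i, phi_psi k hk i (by norm_num) (by norm_num)]
    funext m; unfold sqF
    by_cases e1 : m = i
    · simp [e1]
    · by_cases e2 : m = i + 1 <;> simp [e1, e2]
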